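/- arXiv:1008.0025 — 2 statements merged into one kernel-verified Lean document; each statement's English description precedes it below -/
import Mathlib

section
/- Let v, w₁, …, w_ℓ ∈ D(ℝ)^(n) and let α₁,…,α_ℓ and β₁,…,β_ℓ be elements of T ∪ {-∞} such that v + ∑ᵢ αᵢwᵢ ∈ G₀^(n) and v + ∑ᵢ βᵢwᵢ ∈ G₀^(n). Setting γᵢ to be the tangible lift of αᵢ + βᵢ (i.e., γᵢ = x̂ where x = αᵢ + βᵢ, and γᵢ = -∞ if αᵢ = βᵢ = -∞), one also has v + ∑ᵢ γᵢwᵢ ∈ G₀^(n). -/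
noncomputable section

/-- The extended tropical semifield `D(ℝ)`: `bot` is `-∞`; `nb g r` is the element of
underlying value `r : ℝ`, ghost if `g = true`, tangible if `g = false`. -/
inductive DR : Type where
  | bot : DR
  | nb : Bool → ℝ → DR

namespace DR

/-- Supertropical addition on `D(ℝ)`. -/
def add : DR → DR → DR
  | bot, y => y
  | x, bot => x
  | nb b r, nb c s => if r < s then nb c s else if s < r then nb b r else nb true r

/-- Supertropical multiplication on `D(ℝ)`. -/
def mul : DR → DR → DR
  | bot, _ => bot
  | _, bot => bot
  | nb b r, nb c s => nb (b || c) (r + s)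

theorem bot_add (x : DR) : add bot x = x := by cases x <;> rfl

theorem add_bot (x : DR) : add x bot = x := by cases x <;> rfl

theorem bot_mul (x : DR) : mul bot x = bot := by cases x <;> rfl

theorem mul_bot (x : DR) : mul x bot = bot := by cases x <;> rfl

theorem add_comm' (x y : DR) : add x y = add y x := by
  cases x <;> cases y <;> (try rfl)
  simp only [add]
  split_ifs <;>
    first
      | rfl
      | (exfalso; linarith)
      | (congr 1 <;> first | rfl | linarith)

theorem add_assoc' (x y z : DR) : add (add x y) z = add x (add y z) := by
  cases x with
  | bot => rw [bot_add, bot_add]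
  | nb b r =>
    cases y with
    | bot => rw [add_bot, bot_add]
    | nb c s =>
      cases z with
      | bot => rw [add_bot, add_bot]
      | nb d t =>
        simp only [add]
        split_ifs <;>
          simp only [add] <;>
          (try split_ifs) <;>
          first
            | rfl
            | (exfalso; linarith)
            | (congr 1 <;> first | rfl | linarith)

theorem mul_comm' (x y : DR) : mul x y = mul y x := by
  cases x <;> cases y <;> (try rfl)
  simp [mul, Bool.or_comm, add_comm]

theorem mul_assoc' (x y z : DR) : mul (mul x y) z = mul x (mul y z) := by
  cases x <;> cases y <;> cases z <;> (try rfl) <;>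
    simp [mul, Bool.or_assoc, add_assoc]

theorem one_mul' (x : DR) : mul (nb false 0) x = x := by
  cases x <;> simp [mul]

theorem left_distrib' (x y z : DR) : mul x (add y z) = add (mul x y) (mul x z) := by
  cases x with
  | bot => simp [bot_mul, bot_add]
  | nb b r =>
    cases y with
    | bot => simp [bot_add, mul_bot]
    | nb c s =>
      cases z with
      | bot => simp [add_bot, mul_bot]
      | nb d t =>
        simp only [mul, add]
        split_ifs <;>
          simp only [mul, add, Bool.or_true, Bool.true_or] <;>
          (try split_ifs) <;>
          first
            | rfl
            | (exfalso; linarith)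
            | (congr 1 <;> first | rfl | linarith)

theorem right_distrib' (x y z : DR) : mul (add x y) z = add (mul x z) (mul y z) := by
  rw [mul_comm' (add x y) z, left_distrib', mul_comm' z x, mul_comm' z y]

instance : Add DR := ⟨add⟩
instance : Zero DR := ⟨bot⟩
instance : Mul DR := ⟨mul⟩
instance : One DR := ⟨nb false 0⟩

instance : AddCommMonoid DR where
  add := add
  add_assoc := add_assoc'
  zero := bot
  zero_add := bot_add
  add_zero := add_bot
  add_comm := add_comm'
  nsmul := nsmulRec

instance : CommMonoid DR where
  mul := mul
  mul_assoc := mul_assoc'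
  one := nb false 0
  one_mul := one_mul'
  mul_one := fun x => by show mul x (nb false 0) = x; rw [mul_comm']; exact one_mul' x
  mul_comm := mul_comm'
  npow := npowRec

instance : CommSemiring DR where
  __ := (inferInstance : AddCommMonoid DR)
  __ := (inferInstance : CommMonoid DR)
  left_distrib := left_distrib'
  right_distrib := right_distrib'
  zero_mul := bot_mul
  mul_zero := mul_bot

/-- The ghost ideal `G₀ = ℝ^ν ∪ {-∞}` as a predicate. -/
def IsGhost : DR → Prop
  | bot => True
  | nb b _ => b = true

/-- The tangible elements `T = ℝ` as a predicate. -/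
def Tangible : DR → Prop
  | nb false _ => True
  | _ => False

/-- Membership in `T ∪ {-∞}`. -/
def TangibleOrBot (x : DR) : Prop := x = bot ∨ Tangible x

/-- The underlying value in `ℝ ∪ {-∞}`. -/
def val : DR → WithBot ℝ
  | bot => ⊥
  | nb _ r => (r : WithBot ℝ)

/-- `x ≤_ν y` : comparison of underlying values, `-∞` smallest. -/
def nuLe (x y : DR) : Prop := val x ≤ val y

/-- `x <_ν y` : strict comparison of underlying values, `-∞` smallest. -/
def nuLt (x y : DR) : Prop := val x < val y

/-- The tangible lift `x̂` of `x` (with `hat bot = bot`). -/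
def hat : DR → DR
  | bot => bot
  | nb _ r => nb false r

/-- The ghost map `ν`. -/
def nu : DR → DR
  | bot => bot
  | nb _ r => nb true r

/-- The ghost-surpass relation `x ⊨ y` on `D(ℝ)`. -/
def GhostSurp (x y : DR) : Prop := ∃ c : DR, IsGhost c ∧ x = y + c

end DR

open DR

/-- A vector in `D(ℝ)^(n)` lies in the ghost submodule `G₀^(n)`. -/
def GhostVec {n : ℕ} (v : Fin n → DR) : Prop := ∀ j, IsGhost (v j)

/-- A tangible vector: all entries in `T ∪ {-∞}`. -/
def TangibleVec {n : ℕ} (v : Fin n → DR) : Prop := ∀ j, TangibleOrBot (v j)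

/-- The ghost-surpass relation `v ⊨ w` on vectors. -/
def GhostSurpVec {n : ℕ} (v w : Fin n → DR) : Prop :=
  ∃ u : Fin n → DR, GhostVec u ∧ v = w + u

/-- A family of vectors is tropically dependent. -/
def TropDep {ι : Type*} [Fintype ι] {n : ℕ} (w : ι → Fin n → DR) : Prop :=
  ∃ I : Finset ι, I.Nonempty ∧ ∃ α : ι → DR, (∀ i ∈ I, Tangible (α i)) ∧
    ∀ j : Fin n, IsGhost (∑ i ∈ I, α i * w i j)

/-- A family of vectors is tropically independent. -/
def TropIndep {ι : Type*} [Fintype ι] {n : ℕ} (w : ι → Fin n → DR) : Prop := ¬ TropDep w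

/-- A set of vectors is tropically dependent. -/
def SetTropDep {n : ℕ} (S : Set (Fin n → DR)) : Prop :=
  ∃ I : Finset (Fin n → DR), ↑I ⊆ S ∧ I.Nonempty ∧
    ∃ α : (Fin n → DR) → DR, (∀ w ∈ I, Tangible (α w)) ∧
      ∀ j : Fin n, IsGhost (∑ w ∈ I, α w * w j)

/-- A set of vectors is tropically independent. -/
def SetTropIndep {n : ℕ} (S : Set (Fin n → DR)) : Prop := ¬ SetTropDep S

/-- A d-base of `V`: a maximal tropically independent subset of `V`. -/
def IsDBase {n : ℕ} (V S : Set (Fin n → DR)) : Prop :=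
  S ⊆ V ∧ SetTropIndep S ∧ ∀ S', S ⊆ S' → S' ⊆ V → SetTropIndep S' → S' = S

/-- The rank of `V`: the maximal number of elements of a d-base of `V`. -/
noncomputable def trank {n : ℕ} (V : Set (Fin n → DR)) : ℕ :=
  sSup {m | ∃ S, IsDBase V S ∧ S.Finite ∧ S.ncard = m}

/-- `v` is tropically spanned by `S`. -/
def SpannedBy {n : ℕ} (S : Set (Fin n → DR)) (v : Fin n → DR) : Prop :=
  ∃ I : Finset (Fin n → DR), ↑I ⊆ S ∧ I.Nonempty ∧
    ∃ α : (Fin n → DR) → DR, (∀ w ∈ I, Tangible (α w)) ∧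
      GhostSurpVec v (fun j => ∑ w ∈ I, α w * w j)

/-- The tropical determinant (permanent) of a square matrix over `D(ℝ)`. -/
noncomputable def tperm {k : ℕ} (A : Matrix (Fin k) (Fin k) DR) : DR :=
  ∑ π : Equiv.Perm (Fin k), ∏ i, A (π i) i

/-!
Values add like `max`, and since `αᵢ, βᵢ ∈ T ∪ {-∞}` the lift `γᵢ` of `αᵢ + βᵢ` is whichever
of them has the larger value, so `γᵢwᵢ` dominates both `αᵢwᵢ` and `βᵢwᵢ`. A sum fails to be
ghost only when one term strictly dominates all others. If `∑ γᵢwᵢ` is ghost but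
`v + ∑ γᵢwᵢ` is not, then `v` dominates `∑ γᵢwᵢ`, hence also `∑ αᵢwᵢ`, and
`v + ∑ αᵢwᵢ = v + ∑ γᵢwᵢ`. Otherwise `∑ γᵢwᵢ` has a strictly dominant term `γᵢwᵢ`, equal to
`αᵢwᵢ` (say); it is then also strictly dominant in `∑ αᵢwᵢ`, so the two sums coincide.
-/

namespace DR

variable {ι : Type*}

theorem val_add (x y : DR) : val (x + y) = max (val x) (val y) := by
  change val (add x y) = _
  rcases x with _ | ⟨b, r⟩ <;> rcases y with _ | ⟨c, s⟩ <;> simp only [add, val, bot_le,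
    max_eq_left, max_eq_right]
  rw [← WithBot.coe_max]
  split_ifs with hrs hsr
  · rw [max_eq_right hrs.le]
  · rw [max_eq_left hsr.le]
  · rw [le_antisymm (not_lt.1 hsr) (not_lt.1 hrs), max_self]

theorem val_mul (x y : DR) : val (x * y) = val x + val y := by
  change val (mul x y) = _
  rcases x with _ | ⟨b, r⟩ <;> rcases y with _ | ⟨c, s⟩ <;> simp [mul, val]

theorem val_hat (x : DR) : val (hat x) = val x := by
  cases x <;> rfl

theorem val_mul_le_val_hat_add_mul (a b x : DR) : val (a * x) ≤ val (hat (a + b) * x) := by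
  rw [val_mul, val_mul, val_hat, val_add]
  exact add_le_add (le_max_left _ _) le_rfl

theorem add_eq_left_of_val_lt {x y : DR} (h : val y < val x) : x + y = x := by
  change add x y = x
  rcases x with _ | ⟨b, r⟩ <;> rcases y with _ | ⟨c, s⟩ <;> simp only [val] at h
  · exact absurd h not_lt_bot
  · exact absurd h not_lt_bot
  · rfl
  · have hsr : s < r := WithBot.coe_lt_coe.1 h
    simp only [add, if_neg (not_lt.2 hsr.le), if_pos hsr]

theorem add_eq_right_of_val_lt {x y : DR} (h : val x < val y) : x + y = y := by
  rw [add_comm, add_eq_left_of_val_lt h]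

theorem isGhost_add_of_val_eq {x y : DR} (h : val x = val y) : IsGhost (x + y) := by
  change IsGhost (add x y)
  rcases x with _ | ⟨b, r⟩ <;> rcases y with _ | ⟨c, s⟩ <;> simp only [val] at h
  · trivial
  · exact absurd h.symm WithBot.coe_ne_bot
  · exact absurd h WithBot.coe_ne_bot
  · obtain rfl : r = s := WithBot.coe_inj.1 h
    simp only [add, lt_irrefl, if_false]
    rfl

theorem val_lt_of_isGhost_of_not_isGhost_add {x y : DR} (hy : IsGhost y)
    (h : ¬IsGhost (x + y)) : val y < val x := by
  by_contra! hxy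
  rcases hxy.lt_or_eq with hlt | heq
  · exact h (by rwa [add_eq_right_of_val_lt hlt])
  · exact h (isGhost_add_of_val_eq heq)

theorem hat_eq_hat_of_val_eq {x y : DR} (h : val x = val y) : hat x = hat y := by
  rcases x with _ | ⟨b, r⟩ <;> rcases y with _ | ⟨c, s⟩ <;> simp only [val] at h
  · rfl
  · exact absurd h.symm WithBot.coe_ne_bot
  · exact absurd h WithBot.coe_ne_bot
  · rw [WithBot.coe_inj.1 h]
    rfl

theorem hat_eq_self {a : DR} (ha : TangibleOrBot a) : hat a = a := by
  rcases ha with rfl | ha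
  · rfl
  · rcases a with _ | ⟨_ | _, r⟩
    exacts [ha.elim, rfl, ha.elim]

theorem hat_add_of_val_le {a b : DR} (ha : TangibleOrBot a) (h : val b ≤ val a) :
    hat (a + b) = a := by
  rw [hat_eq_hat_of_val_eq (show val (a + b) = val a by rw [val_add, max_eq_left h]),
    hat_eq_self ha]

theorem val_sum (s : Finset ι) (f : ι → DR) :
    val (∑ k ∈ s, f k) = s.sup fun k => val (f k) := by
  induction s using Finset.cons_induction with
  | empty => rfl
  | cons a s _ ih => rw [Finset.sum_cons, Finset.sup_cons, val_add, ih]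

theorem add_sum_eq_left {x : DR} {s : Finset ι} {f : ι → DR}
    (h : ∀ k ∈ s, val (f k) < val x) : x + ∑ k ∈ s, f k = x := by
  induction s using Finset.cons_induction with
  | empty => rw [Finset.sum_empty, add_zero]
  | cons a s _ ih =>
    rw [Finset.sum_cons, ← add_assoc, add_eq_left_of_val_lt (h a (Finset.mem_cons_self a s)),
      ih fun k hk => h k (Finset.mem_cons_of_mem hk)]

theorem sum_eq_of_val_lt {s : Finset ι} {f : ι → DR} {i : ι} (hi : i ∈ s)
    (hdom : ∀ k ∈ s, k ≠ i → val (f k) < val (f i)) : ∑ k ∈ s, f k = f i := by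
  classical
  rw [← Finset.add_sum_erase s f hi]
  exact add_sum_eq_left fun k hk =>
    hdom k (Finset.mem_of_mem_erase hk) (Finset.ne_of_mem_erase hk)

theorem exists_val_lt_of_not_isGhost_sum {s : Finset ι} {f : ι → DR}
    (h : ¬IsGhost (∑ k ∈ s, f k)) : ∃ i ∈ s, ∀ k ∈ s, k ≠ i → val (f k) < val (f i) := by
  induction s using Finset.cons_induction with
  | empty => exact absurd trivial h
  | cons a s _ ih =>
    rw [Finset.sum_cons] at h
    rcases lt_trichotomy (val (f a)) (val (∑ k ∈ s, f k)) with hlt | heq | hgt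
    · rw [add_eq_right_of_val_lt hlt] at h
      obtain ⟨i, hi, hdom⟩ := ih h
      refine ⟨i, Finset.mem_cons_of_mem hi, fun k hk hki => ?_⟩
      rcases Finset.mem_cons.1 hk with rfl | hk
      · rwa [← sum_eq_of_val_lt hi hdom]
      · exact hdom k hk hki
    · exact absurd (isGhost_add_of_val_eq heq) h
    · refine ⟨a, Finset.mem_cons_self a s, fun k hk hka => ?_⟩
      have hks : k ∈ s := (Finset.mem_cons.1 hk).resolve_left hka
      calc val (f k) ≤ val (∑ k ∈ s, f k) := by
            rw [val_sum]
            exact Finset.le_sup (f := fun k => val (f k)) hks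
        _ < val (f a) := hgt

theorem val_sum_le_val_sum {s : Finset ι} {f g : ι → DR}
    (h : ∀ k ∈ s, val (f k) ≤ val (g k)) : val (∑ k ∈ s, f k) ≤ val (∑ k ∈ s, g k) := by
  rw [val_sum, val_sum]
  exact Finset.sup_mono_fun h

theorem isGhost_add_sum_of_isGhost_sum {x : DR} {s : Finset ι} {f g : ι → DR}
    (hg : IsGhost (∑ k ∈ s, g k)) (hf : IsGhost (x + ∑ k ∈ s, f k))
    (hfg : ∀ k ∈ s, val (f k) ≤ val (g k)) : IsGhost (x + ∑ k ∈ s, g k) := by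
  by_contra hng
  have hgx := val_lt_of_isGhost_of_not_isGhost_add hg hng
  have hfx := (val_sum_le_val_sum hfg).trans_lt hgx
  rw [add_eq_left_of_val_lt hgx] at hng
  rw [add_eq_left_of_val_lt hfx] at hf
  exact hng hf

theorem sum_eq_sum_of_val_lt {s : Finset ι} {f g : ι → DR} {i : ι} (hi : i ∈ s)
    (hdom : ∀ k ∈ s, k ≠ i → val (g k) < val (g i)) (hfi : f i = g i)
    (hfg : ∀ k ∈ s, val (f k) ≤ val (g k)) : ∑ k ∈ s, f k = ∑ k ∈ s, g k := by
  rw [sum_eq_of_val_lt hi hdom, sum_eq_of_val_lt hi fun k hk hki => ?_, hfi]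
  exact hfi ▸ (hfg k hk).trans_lt (hdom k hk hki)

end DR

/-- If `v + ∑ αᵢ wᵢ` and `v + ∑ βᵢ wᵢ` are both ghost, then so is
`v + ∑ γᵢ wᵢ` where `γᵢ` is the tangible lift of `αᵢ + βᵢ`. -/
theorem tangible_lift_of_sum_is_dependence (n l : ℕ) (v : Fin n → DR)
    (w : Fin l → Fin n → DR) (α β : Fin l → DR)
    (hα : ∀ i, TangibleOrBot (α i)) (hβ : ∀ i, TangibleOrBot (β i))
    (h1 : ∀ j : Fin n, IsGhost (v j + ∑ i, α i * w i j))
    (h2 : ∀ j : Fin n, IsGhost (v j + ∑ i, β i * w i j)) :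
    ∀ j : Fin n, IsGhost (v j + ∑ i, DR.hat (α i + β i) * w i j) := by
  intro j
  set c : Fin l → DR := fun i => DR.hat (α i + β i) * w i j
  have hαc : ∀ k ∈ Finset.univ, val (α k * w k j) ≤ val (c k) := fun k _ =>
    val_mul_le_val_hat_add_mul _ _ _
  have hβc : ∀ k ∈ Finset.univ, val (β k * w k j) ≤ val (c k) := fun k _ => by
    simpa only [c, add_comm (α k)] using val_mul_le_val_hat_add_mul (β k) (α k) (w k j)
  by_cases hc : IsGhost (∑ k, c k)
  · exact isGhost_add_sum_of_isGhost_sum hc (h1 j) hαc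
  obtain ⟨i, hi, hdom⟩ := exists_val_lt_of_not_isGhost_sum hc
  rcases le_total (val (β i)) (val (α i)) with hβα | hαβ
  · rw [← sum_eq_sum_of_val_lt hi hdom (by simp only [c, hat_add_of_val_le (hα i) hβα]) hαc]
    exact h1 j
  · rw [← sum_eq_sum_of_val_lt hi hdom
      (by simp only [c, add_comm (α i), hat_add_of_val_le (hβ i) hαβ]) hβc]
    exact h2 j
end
end

section
/- Let V be a D(ℝ)-submodule of D(ℝ)^(n) that has an s-base S. Then S is precisely the set of critical elements of V up to projective equivalence: every element of S is critical, and every critical element of V is projectively equivalent to an element of S. -/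
noncomputable section

open DR

/-- Projective equivalence: `v = α • w` for a tangible scalar `α`. -/
def ProjEquiv {n : ℕ} (v w : Fin n → DR) : Prop := ∃ α : DR, Tangible α ∧ v = α • w

/-- `v` is a critical vector of `V`: one cannot write `v ⊨ v₁ + v₂` with
`v₁, v₂ ∈ V` both outside the projective class of `v`. -/
def Critical {n : ℕ} (V : Set (Fin n → DR)) (v : Fin n → DR) : Prop :=
  ¬ ∃ v₁ ∈ V, ∃ v₂ ∈ V, ¬ ProjEquiv v₁ v ∧ ¬ ProjEquiv v₂ v ∧ GhostSurpVec v (v₁ + v₂)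

/-- `S` tropically spans `V`. -/
def TropSpans {n : ℕ} (S V : Set (Fin n → DR)) : Prop := ∀ v ∈ V, SpannedBy S v

/-- An s-base of `V`: a minimal tropically spanning subset of `V`. -/
def IsSBase {n : ℕ} (V S : Set (Fin n → DR)) : Prop :=
  S ⊆ V ∧ TropSpans S V ∧ ∀ S' ⊂ S, ¬ TropSpans S' V

/-!
If `s ∈ S` satisfies `s ⊨ v₁ + v₂` with `vᵢ ∈ V`, write `vᵢ = βᵢ s + rᵢ` with `rᵢ` spanned
by `S \ {s}` up to ghosts. When `β₁ + β₂ ≠ 1`, this makes `s` spanned by `S \ {s}`, against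
the minimality of `S`. When `β₁ + β₂ = 1`, one `βᵢ` is `1`, so `vᵢ` and `s` each equal the
other plus something, which in `D(ℝ)` forces `vᵢ = s`.

Conversely, a critical `v` ghost-surpasses a tangible combination of elements of `S`; peeling
off one summand at a time, criticality makes `v` a tangible multiple of one of them.
-/

namespace DR

lemma nb_add_nb (b c : Bool) (r s : ℝ) :
    nb b r + nb c s = if r < s then nb c s else if s < r then nb b r else nb true r := rfl

lemma nb_mul_nb (b c : Bool) (r s : ℝ) : nb b r * nb c s = nb (b || c) (r + s) := rfl

@[simp] lemma bot_eq_zero : bot = 0 := rfl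

lemma one_eq_nb : (1 : DR) = nb false 0 := rfl

lemma isGhost_zero : IsGhost 0 := trivial

lemma IsGhost.add {x y : DR} (hx : IsGhost x) (hy : IsGhost y) : IsGhost (x + y) := by
  cases x <;> cases y <;> simp_all only [IsGhost, nb_add_nb] <;> first | trivial | split_ifs <;> rfl

lemma IsGhost.mul_left {x : DR} (hx : IsGhost x) (y : DR) : IsGhost (y * x) := by
  cases x <;> cases y <;> simp_all [IsGhost, nb_mul_nb]

lemma IsGhost.mul_right {x : DR} (hx : IsGhost x) (y : DR) : IsGhost (x * y) :=
  mul_comm y x ▸ hx.mul_left y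

lemma tangible_of_not_isGhost {x : DR} (hx : ¬ IsGhost x) : Tangible x := by
  rcases x with _ | ⟨_ | _, r⟩ <;> simp_all [IsGhost, Tangible]

lemma tangible_one : Tangible 1 := trivial

lemma Tangible.mul {x y : DR} (hx : Tangible x) (hy : Tangible y) : Tangible (x * y) := by
  rcases x with _ | ⟨_ | _, r⟩ <;> rcases y with _ | ⟨_ | _, s⟩ <;> trivial

lemma Tangible.exists_mul_eq_one {x : DR} (hx : Tangible x) : ∃ y, Tangible y ∧ y * x = 1 := by
  rcases x with _ | ⟨_ | _, r⟩
  · exact hx.elim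
  · exact ⟨nb false (-r), trivial, by simp [nb_mul_nb, one_eq_nb]⟩
  · exact hx.elim

lemma Tangible.eq_zero_of_mul_eq_zero {x y : DR} (hx : Tangible x) (h : x * y = 0) : y = 0 := by
  rcases x with _ | ⟨_ | _, r⟩ <;> rcases y with _ | ⟨_ | _, s⟩ <;> trivial

lemma add_eq_zero_iff {x y : DR} : x + y = 0 ↔ x = 0 ∧ y = 0 := by
  refine ⟨fun h => ?_, fun ⟨hx, hy⟩ => by rw [hx, hy, add_zero]⟩
  rcases x with _ | ⟨b, r⟩ <;> rcases y with _ | ⟨c, s⟩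
  all_goals simp only [bot_eq_zero, zero_add, add_zero, nb_add_nb] at h ⊢
  all_goals (try split_ifs at h) <;> grind

lemma add_eq_left_or_right_of_tangible {x y : DR} (h : Tangible (x + y)) :
    x + y = x ∨ x + y = y := by
  rcases x with _ | ⟨b, r⟩ <;> rcases y with _ | ⟨c, s⟩
  all_goals simp only [bot_eq_zero, zero_add, add_zero, nb_add_nb] at h ⊢
  all_goals (try split_ifs at h ⊢) <;> simp_all [Tangible]

lemma eq_one_or_eq_one_of_add_eq_one {x y : DR} (h : x + y = 1) : x = 1 ∨ y = 1 := by
  rcases add_eq_left_or_right_of_tangible (h ▸ tangible_one) with hx | hy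
  exacts [Or.inl (hx ▸ h), Or.inr (hy ▸ h)]

lemma eq_of_eq_add_of_eq_add {x y a b : DR} (h₁ : x = y + a) (h₂ : y = x + b) : x = y := by
  rcases x with _ | ⟨e, p⟩ <;> rcases y with _ | ⟨f, q⟩ <;>
    rcases a with _ | ⟨c, s⟩ <;> rcases b with _ | ⟨d, t⟩
  all_goals simp only [bot_eq_zero, zero_add, add_zero, nb_add_nb] at h₁ h₂ ⊢
  all_goals (try split_ifs at h₁ h₂) <;> grind

/-- A tangible `β ≠ 1` shifts the value of `x` by a nonzero amount, so `β * x` is either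
dominated by `x` or dominates it; the latter is incompatible with `x = β * x + y`. -/
lemma eq_of_eq_mul_add {β x y : DR} (hβ : Tangible β) (hβ1 : β ≠ 1) (h : x = β * x + y) :
    x = y := by
  rcases β with _ | ⟨_ | _, r⟩ <;> simp only [Tangible] at hβ
  have hr : r ≠ 0 := by rintro rfl; exact hβ1 rfl
  rcases x with _ | ⟨b, q⟩ <;> rcases y with _ | ⟨c, t⟩
  all_goals simp only [bot_eq_zero, zero_add, add_zero, mul_zero, nb_mul_nb, nb_add_nb] at h ⊢
  all_goals (try split_ifs at h) <;> grind

end DR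

open DR

section Vectors

variable {n : ℕ}

lemma vec_eq_zero_of_add_eq_zero {v w : Fin n → DR} (h : v + w = 0) : v = 0 :=
  funext fun j => (add_eq_zero_iff.mp (congrFun h j)).1

lemma vec_eq_of_eq_add_of_eq_add {v w a b : Fin n → DR} (h₁ : v = w + a) (h₂ : w = v + b) :
    v = w :=
  funext fun j => eq_of_eq_add_of_eq_add (congrFun h₁ j) (congrFun h₂ j)

lemma DR.Tangible.vec_eq_zero_of_smul_eq_zero {α : DR} (hα : Tangible α) {v : Fin n → DR}
    (h : α • v = 0) : v = 0 :=
  funext fun j => hα.eq_zero_of_mul_eq_zero (congrFun h j)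

lemma fun_sum_mul_eq_sum_smul (I : Finset (Fin n → DR)) (α : (Fin n → DR) → DR) :
    (fun j => ∑ w ∈ I, α w * w j) = ∑ w ∈ I, α w • w := by
  ext j
  simp [Finset.sum_apply]

variable (n) in
def ghostSubmodule : Submodule DR (Fin n → DR) where
  carrier := {v | GhostVec v}
  add_mem' hv hw j := (hv j).add (hw j)
  zero_mem' _ := isGhost_zero
  smul_mem' c _ hv j := (hv j).mul_left c

lemma smul_mem_ghostSubmodule {c : DR} (hc : IsGhost c) (v : Fin n → DR) :
    c • v ∈ ghostSubmodule n :=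
  fun j => hc.mul_right (v j)

lemma GhostSurpVec.eq_zero_of_zero {v : Fin n → DR} (h : GhostSurpVec 0 v) : v = 0 := by
  obtain ⟨u, -, hu⟩ := h
  exact vec_eq_zero_of_add_eq_zero hu.symm

lemma GhostSurpVec.of_eq_smul_add {β : DR} (hβ : β ≠ 1) {s r : Fin n → DR}
    (h : s = β • s + r) : GhostSurpVec s r := by
  by_cases hg : IsGhost β
  · exact ⟨β • s, smul_mem_ghostSubmodule hg s, h.trans (add_comm _ _)⟩
  · refine ⟨0, (ghostSubmodule n).zero_mem, ?_⟩
    rw [add_zero]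
    exact funext fun j => eq_of_eq_mul_add (tangible_of_not_isGhost hg) hβ (congrFun h j)

lemma ProjEquiv.refl (v : Fin n → DR) : ProjEquiv v v :=
  ⟨1, tangible_one, (one_smul DR v).symm⟩

lemma ProjEquiv.symm {v w : Fin n → DR} (h : ProjEquiv v w) : ProjEquiv w v := by
  obtain ⟨α, hα, rfl⟩ := h
  obtain ⟨β, hβ, hβα⟩ := hα.exists_mul_eq_one
  exact ⟨β, hβ, by rw [smul_smul, hβα, one_smul]⟩

lemma ProjEquiv.trans {u v w : Fin n → DR} (h₁ : ProjEquiv u v) (h₂ : ProjEquiv v w) :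
    ProjEquiv u w := by
  obtain ⟨α, hα, rfl⟩ := h₁
  obtain ⟨β, hβ, rfl⟩ := h₂
  exact ⟨α * β, hα.mul hβ, smul_smul α β w⟩

lemma projEquiv_smul {α : DR} (hα : Tangible α) (v : Fin n → DR) : ProjEquiv (α • v) v :=
  ⟨α, hα, rfl⟩

lemma ProjEquiv.eq_zero {v : Fin n → DR} (h : ProjEquiv 0 v) : v = 0 := by
  obtain ⟨α, hα, h⟩ := h
  exact hα.vec_eq_zero_of_smul_eq_zero h.symm

lemma zero_mem_of_tropSpans {S V : Set (Fin n → DR)} (hS : TropSpans S V) (hV : 0 ∈ V) :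
    0 ∈ S := by
  classical
  obtain ⟨I, hIS, ⟨w, hw⟩, α, hα, hsurp⟩ := hS 0 hV
  rw [fun_sum_mul_eq_sum_smul, ← Finset.add_sum_erase I _ hw] at hsurp
  have hw0 : w = 0 := (hα w hw).vec_eq_zero_of_smul_eq_zero
    (vec_eq_zero_of_add_eq_zero hsurp.eq_zero_of_zero)
  exact hw0 ▸ hIS hw

/-- Splitting each coefficient into a tangible and a ghost part shows that, up to ghosts,
arbitrary linear combinations are tangible ones; the vector `0 ∈ T` pads the empty
combination. -/
lemma spannedBy_iff_mem_span_sup_ghost {T : Set (Fin n → DR)} (hT : 0 ∈ T)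
    {v : Fin n → DR} : SpannedBy T v ↔ v ∈ Submodule.span DR T ⊔ ghostSubmodule n := by
  classical
  constructor
  · rintro ⟨I, hIT, -, α, -, u, hu, rfl⟩
    rw [fun_sum_mul_eq_sum_smul]
    exact Submodule.add_mem_sup
      (Submodule.sum_mem _ fun w hw => Submodule.smul_mem _ _ (Submodule.subset_span (hIT hw))) hu
  · intro hv
    obtain ⟨x, hx, g, hg, rfl⟩ := Submodule.mem_sup.mp hv
    obtain ⟨c, I, hIT, -, rfl⟩ := Submodule.mem_span_iff_exists_finset_subset.mp hx
    set J := I.filter fun w => ¬ IsGhost (c w)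
    refine ⟨insert 0 J, ?_, Finset.insert_nonempty _ _, fun w => if IsGhost (c w) then 1 else c w,
      ?_, ∑ w ∈ I.filter fun w => IsGhost (c w), c w • w + g, ?_, ?_⟩
    · rw [Finset.coe_insert]
      exact Set.insert_subset hT ((Finset.coe_subset.mpr (Finset.filter_subset _ I)).trans hIT)
    · intro w _
      dsimp only
      split_ifs with hw
      exacts [tangible_one, tangible_of_not_isGhost hw]
    · exact add_mem (Submodule.sum_mem _ fun w hw =>
        smul_mem_ghostSubmodule (Finset.mem_filter.mp hw).2 w) hg
    · rw [fun_sum_mul_eq_sum_smul,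
        Finset.sum_insert_of_eq_zero_if_notMem fun _ => by rw [smul_zero],
        ← Finset.sum_filter_not_add_sum_filter I fun w => IsGhost (c w), add_assoc]
      congr 1
      exact Finset.sum_congr rfl fun w hw => by rw [if_neg (Finset.mem_filter.mp hw).2]

lemma tropSpans_iff_le {T : Set (Fin n → DR)} (hT : 0 ∈ T) {V : Submodule DR (Fin n → DR)} :
    TropSpans T V ↔ V ≤ Submodule.span DR T ⊔ ghostSubmodule n :=
  forall₂_congr fun _ _ => spannedBy_iff_mem_span_sup_ghost hT

lemma critical_zero (V : Set (Fin n → DR)) : Critical V 0 := by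
  rintro ⟨v₁, -, v₂, -, hv₁, -, hsurp⟩
  rw [vec_eq_zero_of_add_eq_zero hsurp.eq_zero_of_zero] at hv₁
  exact hv₁ (.refl 0)

end Vectors

section Critical

variable {n : ℕ} {V : Submodule DR (Fin n → DR)}

lemma Critical.exists_projEquiv_of_ghostSurpVec_sum {v : Fin n → DR}
    (hv : Critical (V : Set (Fin n → DR)) v) {ι : Type*} {I : Finset ι} (hI : I.Nonempty) :
    ∀ x : ι → Fin n → DR, (∀ i ∈ I, x i ∈ V) → GhostSurpVec v (∑ i ∈ I, x i) →
      ∃ i ∈ I, ProjEquiv v (x i) := by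
  induction hI using Finset.Nonempty.cons_induction with
  | singleton a =>
    intro x hx hsurp
    refine ⟨a, Finset.mem_singleton_self a, ?_⟩
    rw [Finset.sum_singleton, ← add_zero (x a)] at hsurp
    by_contra hva
    refine hv ⟨x a, hx a (Finset.mem_singleton_self a), 0, V.zero_mem,
      fun h => hva h.symm, fun h => hva ?_, hsurp⟩
    rw [h.eq_zero] at hsurp ⊢
    rw [vec_eq_zero_of_add_eq_zero hsurp.eq_zero_of_zero]
    exact .refl 0
  | cons a s ha hs ih =>
    intro x hx hsurp
    rw [Finset.sum_cons] at hsurp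
    by_contra hne
    refine hv ⟨x a, hx a (Finset.mem_cons_self a s), ∑ i ∈ s, x i,
      V.sum_mem fun i hi => hx i (Finset.mem_cons_of_mem hi),
      fun h => hne ⟨a, Finset.mem_cons_self a s, h.symm⟩, fun h => ?_, hsurp⟩
    obtain ⟨γ, hγ, hvγ⟩ := h.symm
    obtain ⟨i, hi, hvi⟩ := ih (fun i => γ • x i)
      (fun i hi => V.smul_mem γ (hx i (Finset.mem_cons_of_mem hi)))
      ⟨0, (ghostSubmodule n).zero_mem, by rw [hvγ, Finset.smul_sum, add_zero]⟩
    exact hne ⟨i, Finset.mem_cons_of_mem hi, hvi.trans (projEquiv_smul hγ (x i))⟩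

variable {S : Set (Fin n → DR)}

lemma IsSBase.exists_projEquiv_of_critical (h : IsSBase (V : Set (Fin n → DR)) S)
    {v : Fin n → DR} (hv : v ∈ V) (hc : Critical (V : Set (Fin n → DR)) v) :
    ∃ s ∈ S, ProjEquiv v s := by
  obtain ⟨I, hIS, hI, α, hα, hsurp⟩ := h.2.1 v hv
  rw [fun_sum_mul_eq_sum_smul] at hsurp
  obtain ⟨w, hw, hvw⟩ := hc.exists_projEquiv_of_ghostSurpVec_sum hI (fun w => α w • w)
    (fun w hw => V.smul_mem (α w) (h.1 (hIS hw))) hsurp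
  exact ⟨w, hIS hw, hvw.trans (projEquiv_smul (hα w hw) w)⟩

lemma IsSBase.critical (h : IsSBase (V : Set (Fin n → DR)) S) {s : Fin n → DR} (hs : s ∈ S) :
    Critical (V : Set (Fin n → DR)) s := by
  rcases eq_or_ne s 0 with rfl | hs0
  · exact critical_zero _
  have h0 : (0 : Fin n → DR) ∈ S \ {s} :=
    ⟨zero_mem_of_tropSpans h.2.1 V.zero_mem, Ne.symm hs0⟩
  have hVW : V ≤ (DR ∙ s) ⊔ (Submodule.span DR (S \ {s}) ⊔ ghostSubmodule n) := by
    rw [← sup_assoc, ← Submodule.span_insert]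
    exact ((tropSpans_iff_le h0.1).mp h.2.1).trans
      (sup_le_sup_right (Submodule.span_mono (Set.subset_insert_sdiff_singleton s S)) _)
  set W := Submodule.span DR (S \ {s}) ⊔ ghostSubmodule n
  have hsW : s ∉ W := fun hsW => h.2.2 (S \ {s}) (Set.sdiff_singleton_ssubset.mpr hs)
    ((tropSpans_iff_le h0).mpr
      (hVW.trans (sup_le ((Submodule.span_singleton_le_iff_mem _ _).mpr hsW) le_rfl)))
  have hdecomp : ∀ v ∈ V, ∃ β : DR, ∃ r ∈ W, v = β • s + r := fun v hv => by
    obtain ⟨y, hy, r, hr, rfl⟩ := Submodule.mem_sup.mp (hVW hv)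
    obtain ⟨β, rfl⟩ := Submodule.mem_span_singleton.mp hy
    exact ⟨β, r, hr, rfl⟩
  rintro ⟨v₁, hv₁, v₂, hv₂, hn₁, hn₂, u, hu, hsum⟩
  obtain ⟨β₁, r₁, hr₁, hv₁eq⟩ := hdecomp v₁ hv₁
  obtain ⟨β₂, r₂, hr₂, hv₂eq⟩ := hdecomp v₂ hv₂
  by_cases hβ : β₁ + β₂ = 1
  · rcases eq_one_or_eq_one_of_add_eq_one hβ with hβ₁ | hβ₂
    · have hv₁s : v₁ = s := vec_eq_of_eq_add_of_eq_add (by rw [hv₁eq, hβ₁, one_smul])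
        (hsum.trans (add_assoc _ _ _))
      exact hn₁ (hv₁s ▸ .refl s)
    · have hv₂s : v₂ = s := vec_eq_of_eq_add_of_eq_add (by rw [hv₂eq, hβ₂, one_smul])
        (hsum.trans (by abel : v₁ + v₂ + u = v₂ + (v₁ + u)))
      exact hn₂ (hv₂s ▸ .refl s)
  · have hs_eq : s = (β₁ + β₂) • s + (r₁ + r₂ + u) := by
      calc s = v₁ + v₂ + u := hsum
        _ = _ := by rw [hv₁eq, hv₂eq, add_smul]; abel
    obtain ⟨g, hg, hsg⟩ := GhostSurpVec.of_eq_smul_add hβ hs_eq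
    exact hsW (hsg ▸ add_mem (add_mem (add_mem hr₁ hr₂) (Submodule.mem_sup_right hu))
      (Submodule.mem_sup_right hg))

end Critical

/-- An s-base of `V` is precisely the set of critical elements of `V`, up to
projective equivalence. -/
theorem sbase_is_critical_set (n : ℕ) (V : Submodule DR (Fin n → DR))
    (S : Set (Fin n → DR)) (h : IsSBase (V : Set (Fin n → DR)) S) :
    (∀ s ∈ S, Critical (V : Set (Fin n → DR)) s) ∧
    (∀ v ∈ V, Critical (V : Set (Fin n → DR)) v → ∃ s ∈ S, ProjEquiv v s) :=
  ⟨fun _ hs => h.critical hs, fun _ hv hc => h.exists_projEquiv_of_critical hv hc⟩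
end
end
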